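/- arXiv:2111.12084 — 4 statements merged into one kernel-verified Lean document; each statement's English description precedes it below -/
import Mathlib

section
/- Let X be a measurable space, H a set of measurable functions h : X → {0,1} ⊆ ℝ, and D_s, D_t probability measures on X (source and target distributions). Let f_t : X → [0,1] be a measurable target labeling function. Define F_D(g,f) := E_{x∼D}[|g(x) − f(x)|] and d_{HΔH}(D_s,D_t) := 2·sup_{h,h'∈H} |D_s({x : h(x) ≠ h'(x)}) − D_t({x : h(x) ≠ h'(x)})|. Then for any h, h*, h̃*, f̃* ∈ H: F_{D_t}(h, f_t) − F_{D_t}(h*, f_t) ≤ F_{D_s}(h, h̃*) + F_{D_s}(h*, f̃*) + F_{D_s}(h̃*, f̃*) + (1/2)·d_{HΔH}(D_s, D_t). -/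
open MeasureTheory

private lemma intAbs {X : Type*} [MeasurableSpace X] (μ : Measure X) [IsFiniteMeasure μ]
    {f g : X → ℝ} (hf : Measurable f) (hg : Measurable g)
    (hfb : ∀ x, |f x| ≤ 1) (hgb : ∀ x, |g x| ≤ 1) :
    Integrable (fun x => |f x - g x|) μ := by
  refine (integrable_const (2:ℝ)).mono' ((hf.sub hg).abs.aestronglyMeasurable) ?_
  filter_upwards with x
  have := abs_sub (f x) (g x)
  simp only [Real.norm_eq_abs, abs_abs]
  linarith [hfb x, hgb x]

private lemma abs01 {a : ℝ} (ha : a = 0 ∨ a = 1) : |a| ≤ 1 := by rcases ha with h | h <;> simp [h]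

private lemma integral_abs_eq {X : Type*} [MeasurableSpace X] (μ : Measure X)
    {f g : X → ℝ} (hf : Measurable f) (hg : Measurable g)
    (hf01 : ∀ x, f x = 0 ∨ f x = 1) (hg01 : ∀ x, g x = 0 ∨ g x = 1) :
    ∫ x, |f x - g x| ∂μ = (μ {x | f x ≠ g x}).toReal := by
  have hA : MeasurableSet {x | f x ≠ g x} :=
    (measurableSet_eq_fun hf hg).compl
  have heq : ∀ x, |f x - g x| = Set.indicator {x | f x ≠ g x} (fun _ => (1:ℝ)) x := by
    intro x
    by_cases hx : f x = g x
    · simp [Set.indicator, hx]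
    · have : |f x - g x| = 1 := by
        rcases hf01 x with h1 | h1 <;> rcases hg01 x with h2 | h2 <;>
          simp_all <;> norm_num [h1, h2]
      rw [this]; simp [Set.indicator_apply, Set.mem_setOf_eq, hx]
  simp_rw [heq]
  rw [integral_indicator hA]
  simp [Measure.real]

/-- The deterministic source-side decomposition in the proof of the paper's
Theorem 3: for any `h, h*, h̃*, f̃* ∈ H`,
`F_{D_t}(h, f_t) - F_{D_t}(h*, f_t) ≤ F_{D_s}(h, h̃*) + F_{D_s}(h*, f̃*)
  + F_{D_s}(h̃*, f̃*) + (1/2)·d_{HΔH}(D_s, D_t)`. -/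
theorem excess_risk_source_decomposition {X : Type*} [MeasurableSpace X]
    (H : Set (X → ℝ))
    (hH : ∀ h ∈ H, Measurable h ∧ ∀ x, h x = 0 ∨ h x = 1)
    (Ds Dt : Measure X)
    [IsProbabilityMeasure Ds] [IsProbabilityMeasure Dt]
    (ft : X → ℝ) (hft : Measurable ft) (hft01 : ∀ x, ft x ∈ Set.Icc (0 : ℝ) 1)
    (h hstar htilstar ftilstar : X → ℝ)
    (hh : h ∈ H) (hhstar : hstar ∈ H) (hhtil : htilstar ∈ H) (hftil : ftilstar ∈ H) :
    (∫ x, |h x - ft x| ∂Dt) - (∫ x, |hstar x - ft x| ∂Dt) ≤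
      (∫ x, |h x - htilstar x| ∂Ds) + (∫ x, |hstar x - ftilstar x| ∂Ds) +
        (∫ x, |htilstar x - ftilstar x| ∂Ds) +
      (1 / 2) *
        (2 * ⨆ p : H × H,
          |(Ds {x | p.1.1 x ≠ p.2.1 x}).toReal - (Dt {x | p.1.1 x ≠ p.2.1 x}).toReal|) := by
  obtain ⟨hm, h01⟩ := hH h hh
  obtain ⟨hsm, hs01⟩ := hH hstar hhstar
  obtain ⟨htm, ht01⟩ := hH htilstar hhtil
  obtain ⟨hfm, hf01⟩ := hH ftilstar hftil
  have hftb : ∀ x, |ft x| ≤ 1 := fun x => by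
    have := hft01 x; rw [abs_le]; constructor <;> [linarith [this.1]; exact this.2]
  -- Step 1: ∫|h-ft|dDt - ∫|h*-ft|dDt ≤ ∫|h-h*|dDt
  have step1 : (∫ x, |h x - ft x| ∂Dt) - (∫ x, |hstar x - ft x| ∂Dt) ≤
      ∫ x, |h x - hstar x| ∂Dt := by
    have hint1 := intAbs Dt hm hsm (fun x => abs01 (h01 x)) (fun x => abs01 (hs01 x))
    have hint2 := intAbs Dt hsm hft (fun x => abs01 (hs01 x)) hftb
    have : (∫ x, |h x - ft x| ∂Dt) ≤ ∫ x, (|h x - hstar x| + |hstar x - ft x|) ∂Dt := by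
      refine integral_mono (intAbs Dt hm hft (fun x => abs01 (h01 x)) hftb) (hint1.add hint2) ?_
      intro x; exact abs_sub_le _ _ _
    rw [integral_add hint1 hint2] at this
    linarith
  -- Step 2: ∫|h-h*|dDt ≤ ∫|h-h*|dDs + sup
  set S := ⨆ p : H × H,
      |(Ds {x | p.1.1 x ≠ p.2.1 x}).toReal - (Dt {x | p.1.1 x ≠ p.2.1 x}).toReal| with hS
  have hbdd : BddAbove (Set.range fun p : H × H =>
      |(Ds {x | p.1.1 x ≠ p.2.1 x}).toReal - (Dt {x | p.1.1 x ≠ p.2.1 x}).toReal|) := by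
    refine ⟨2, ?_⟩
    rintro _ ⟨p, rfl⟩
    have h1 : (Ds {x | p.1.1 x ≠ p.2.1 x}).toReal ≤ 1 := by
      have := prob_le_one (μ := Ds) (s := {x | p.1.1 x ≠ p.2.1 x})
      exact ENNReal.toReal_le_of_le_ofReal one_pos.le (by simpa using this)
    have h2 : (Dt {x | p.1.1 x ≠ p.2.1 x}).toReal ≤ 1 := by
      have := prob_le_one (μ := Dt) (s := {x | p.1.1 x ≠ p.2.1 x})
      exact ENNReal.toReal_le_of_le_ofReal one_pos.le (by simpa using this)
    have h3 : (0:ℝ) ≤ (Ds {x | p.1.1 x ≠ p.2.1 x}).toReal := ENNReal.toReal_nonneg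
    have h4 : (0:ℝ) ≤ (Dt {x | p.1.1 x ≠ p.2.1 x}).toReal := ENNReal.toReal_nonneg
    rw [abs_le]; constructor <;> linarith
  have step2 : (∫ x, |h x - hstar x| ∂Dt) ≤ (∫ x, |h x - hstar x| ∂Ds) + S := by
    rw [integral_abs_eq Dt hm hsm h01 hs01, integral_abs_eq Ds hm hsm h01 hs01]
    have hle : |(Ds {x | h x ≠ hstar x}).toReal - (Dt {x | h x ≠ hstar x}).toReal| ≤ S :=
      le_ciSup hbdd (⟨⟨h, hh⟩, ⟨hstar, hhstar⟩⟩ : H × H)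
    have := abs_le.mp hle
    linarith [neg_abs_le ((Ds {x | h x ≠ hstar x}).toReal - (Dt {x | h x ≠ hstar x}).toReal)]
  -- Step 3: triangle on Ds
  have step3 : (∫ x, |h x - hstar x| ∂Ds) ≤
      (∫ x, |h x - htilstar x| ∂Ds) + (∫ x, |htilstar x - ftilstar x| ∂Ds) +
        (∫ x, |ftilstar x - hstar x| ∂Ds) := by
    have i1 := intAbs Ds hm htm (fun x => abs01 (h01 x)) (fun x => abs01 (ht01 x))
    have i2 := intAbs Ds htm hfm (fun x => abs01 (ht01 x)) (fun x => abs01 (hf01 x))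
    have i3 := intAbs Ds hfm hsm (fun x => abs01 (hf01 x)) (fun x => abs01 (hs01 x))
    have i12 : Integrable (fun x => |h x - htilstar x| + |htilstar x - ftilstar x|) Ds := i1.add i2
    have : (∫ x, |h x - hstar x| ∂Ds) ≤
        ∫ x, (|h x - htilstar x| + |htilstar x - ftilstar x| + |ftilstar x - hstar x|) ∂Ds := by
      refine integral_mono (intAbs Ds hm hsm (fun x => abs01 (h01 x)) (fun x => abs01 (hs01 x)))
        (i12.add i3) ?_
      intro x
      calc |h x - hstar x| ≤ |h x - ftilstar x| + |ftilstar x - hstar x| := abs_sub_le _ _ _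
        _ ≤ |h x - htilstar x| + |htilstar x - ftilstar x| + |ftilstar x - hstar x| := by
            linarith [abs_sub_le (h x) (htilstar x) (ftilstar x)]
    rwa [integral_add i12 i3, integral_add i1 i2] at this
  have hswap : (∫ x, |ftilstar x - hstar x| ∂Ds) = ∫ x, |hstar x - ftilstar x| ∂Ds := by
    congr 1; funext x; rw [abs_sub_comm]
  rw [hswap] at step3
  have : (1:ℝ) / 2 * (2 * S) = S := by ring
  rw [this]
  linarith
end

section
/- Let X be a measurable space, H a set of measurable functions h : X → {0,1} ⊆ ℝ, and D_s, D_t probability measures on X (source and target distributions). Let f_t : X → [0,1] be a measurable target labeling function. Define F_D(g,f) := E_{x∼D}[|g(x) − f(x)|] and d_{HΔH}(D_s,D_t) := 2·sup_{h,h'∈H} |D_s({x : h(x) ≠ h'(x)}) − D_t({x : h(x) ≠ h'(x)})|. Then for any h, h*, h̃*, f̃* ∈ H: F_{D_t}(h, f_t) − F_{D_t}(h*, f_t) ≤ F_{D_t}(h, h̃*) + F_{D_t}(h*, f̃*) + F_{D_s}(h̃*, f̃*) + (1/2)·d_{HΔH}(D_s, D_t). -/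
open MeasureTheory

lemma aux_integrable {X : Type*} [MeasurableSpace X] (μ : Measure X)
    [IsProbabilityMeasure μ] {f g : X → ℝ} (hf : Measurable f) (hg : Measurable g)
    (hbf : ∀ x, |f x| ≤ 1) (hbg : ∀ x, |g x| ≤ 1) :
    Integrable (fun x => |f x - g x|) μ := by
  apply (integrable_const (2:ℝ)).mono' ((hf.sub hg).abs.aestronglyMeasurable)
  filter_upwards with x
  rw [Real.norm_eq_abs, abs_abs]
  calc |f x - g x| ≤ |f x| + |g x| := abs_sub _ _
    _ ≤ 2 := by linarith [hbf x, hbg x]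

/-- The deterministic target-side decomposition in the proof of the paper's
Theorem 3: for any `h, h*, h̃*, f̃* ∈ H`,
`F_{D_t}(h, f_t) - F_{D_t}(h*, f_t) ≤ F_{D_t}(h, h̃*) + F_{D_t}(h*, f̃*)
  + F_{D_s}(h̃*, f̃*) + (1/2)·d_{HΔH}(D_s, D_t)`. -/
theorem excess_risk_target_decomposition {X : Type*} [MeasurableSpace X]
    (H : Set (X → ℝ))
    (hH : ∀ h ∈ H, Measurable h ∧ ∀ x, h x = 0 ∨ h x = 1)
    (Ds Dt : Measure X)
    [IsProbabilityMeasure Ds] [IsProbabilityMeasure Dt]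
    (ft : X → ℝ) (hft : Measurable ft) (hft01 : ∀ x, ft x ∈ Set.Icc (0 : ℝ) 1)
    (h hstar htilstar ftilstar : X → ℝ)
    (hh : h ∈ H) (hhstar : hstar ∈ H) (hhtil : htilstar ∈ H) (hftil : ftilstar ∈ H) :
    (∫ x, |h x - ft x| ∂Dt) - (∫ x, |hstar x - ft x| ∂Dt) ≤
      (∫ x, |h x - htilstar x| ∂Dt) + (∫ x, |hstar x - ftilstar x| ∂Dt) +
        (∫ x, |htilstar x - ftilstar x| ∂Ds) +
      (1 / 2) *
        (2 * ⨆ p : H × H,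
          |(Ds {x | p.1.1 x ≠ p.2.1 x}).toReal - (Dt {x | p.1.1 x ≠ p.2.1 x}).toReal|) := by
  obtain ⟨mh, bh⟩ := hH h hh
  obtain ⟨mhs, bhs⟩ := hH hstar hhstar
  obtain ⟨mht, bht⟩ := hH htilstar hhtil
  obtain ⟨mft, bftl⟩ := hH ftilstar hftil
  have bnd : ∀ (g : X → ℝ), (∀ x, g x = 0 ∨ g x = 1) → ∀ x, |g x| ≤ 1 := by
    intro g hg x; rcases hg x with h | h <;> rw [h] <;> norm_num
  have bft : ∀ x, |ft x| ≤ 1 := fun x => abs_le.2 ⟨by linarith [(hft01 x).1], (hft01 x).2⟩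
  have bh' := bnd h bh; have bhs' := bnd hstar bhs
  have bht' := bnd htilstar bht; have bftl' := bnd ftilstar bftl
  -- disagreement set
  set A : Set X := {x | htilstar x ≠ ftilstar x} with hA
  have mA : MeasurableSet A := by
    have : A = (fun x => htilstar x - ftilstar x) ⁻¹' ({0}ᶜ) := by
      ext x; simp [hA, sub_eq_zero]
    rw [this]
    exact (mht.sub mft) (MeasurableSet.singleton 0).compl
  have hind : ∀ (μ : Measure X), (∫ x, |htilstar x - ftilstar x| ∂μ) = (μ A).toReal := by
    intro μ
    have : (fun x => |htilstar x - ftilstar x|) = A.indicator (fun _ => (1:ℝ)) := by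
      ext x
      by_cases hx : htilstar x = ftilstar x
      · simp [Set.indicator, hA, hx]
      · have : |htilstar x - ftilstar x| = 1 := by
          rcases bht x with h1 | h1 <;> rcases bftl x with h2 | h2 <;>
            simp [h1, h2] at hx ⊢
        simp [Set.indicator, hA, hx, this]
    rw [this, integral_indicator mA]
    simp
    rfl
  -- triangle steps
  have tri1 : (∫ x, |h x - ft x| ∂Dt) ≤
      (∫ x, |h x - htilstar x| ∂Dt) + (∫ x, |htilstar x - ftilstar x| ∂Dt) +
      (∫ x, |ftilstar x - ft x| ∂Dt) := by
    have i1 := aux_integrable Dt mh mht bh' bht'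
    have i2 := aux_integrable Dt mht mft bht' bftl'
    have i3 := aux_integrable Dt mft hft bftl' bft
    have i12 : Integrable (fun x => |h x - htilstar x| + |htilstar x - ftilstar x|) Dt := i1.add i2
    calc (∫ x, |h x - ft x| ∂Dt)
        ≤ ∫ x, (|h x - htilstar x| + |htilstar x - ftilstar x| + |ftilstar x - ft x|) ∂Dt := by
          apply integral_mono (aux_integrable Dt mh hft bh' bft) (i12.add i3)
          intro x
          calc |h x - ft x| = |(h x - htilstar x) + (htilstar x - ftilstar x) + (ftilstar x - ft x)| := by ring_nf
            _ ≤ |h x - htilstar x| + |htilstar x - ftilstar x| + |ftilstar x - ft x| := by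
              exact (abs_add_le _ _).trans (by gcongr; exact abs_add_le _ _)
      _ = _ := by rw [integral_add i12 i3, integral_add i1 i2]
  have tri2 : (∫ x, |ftilstar x - ft x| ∂Dt) ≤
      (∫ x, |hstar x - ftilstar x| ∂Dt) + (∫ x, |hstar x - ft x| ∂Dt) := by
    have i1 := aux_integrable Dt mhs mft bhs' bftl'
    have i2 := aux_integrable Dt mhs hft bhs' bft
    have i12 : Integrable (fun x => |hstar x - ftilstar x| + |hstar x - ft x|) Dt := i1.add i2
    calc (∫ x, |ftilstar x - ft x| ∂Dt)
        ≤ ∫ x, (|hstar x - ftilstar x| + |hstar x - ft x|) ∂Dt := by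
          apply integral_mono (aux_integrable Dt mft hft bftl' bft) i12
          intro x
          calc |ftilstar x - ft x| = |-(hstar x - ftilstar x) + (hstar x - ft x)| := by ring_nf
            _ ≤ |hstar x - ftilstar x| + |hstar x - ft x| := by
              rw [abs_sub_comm (hstar x)]
              simpa using abs_add_le (-(hstar x - ftilstar x)) (hstar x - ft x)
      _ = _ := integral_add i1 i2
  -- domain shift
  have shift : (∫ x, |htilstar x - ftilstar x| ∂Dt) ≤
      (∫ x, |htilstar x - ftilstar x| ∂Ds) +
      (⨆ p : H × H, |(Ds {x | p.1.1 x ≠ p.2.1 x}).toReal - (Dt {x | p.1.1 x ≠ p.2.1 x}).toReal|) := by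
    rw [hind Dt, hind Ds]
    have hbdd : BddAbove (Set.range (fun p : H × H =>
        |(Ds {x | p.1.1 x ≠ p.2.1 x}).toReal - (Dt {x | p.1.1 x ≠ p.2.1 x}).toReal|)) := by
      refine ⟨1, ?_⟩
      rintro r ⟨p, rfl⟩
      have h1 : (Ds {x | p.1.1 x ≠ p.2.1 x}).toReal ≤ 1 := by
        have := prob_le_one (μ := Ds) (s := {x | p.1.1 x ≠ p.2.1 x})
        exact ENNReal.toReal_le_of_le_ofReal zero_le_one (by simpa using this)
      have h2 : (Dt {x | p.1.1 x ≠ p.2.1 x}).toReal ≤ 1 := by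
        have := prob_le_one (μ := Dt) (s := {x | p.1.1 x ≠ p.2.1 x})
        exact ENNReal.toReal_le_of_le_ofReal zero_le_one (by simpa using this)
      have h3 : (0:ℝ) ≤ (Ds {x | p.1.1 x ≠ p.2.1 x}).toReal := ENNReal.toReal_nonneg
      have h4 : (0:ℝ) ≤ (Dt {x | p.1.1 x ≠ p.2.1 x}).toReal := ENNReal.toReal_nonneg
      rw [abs_le]; constructor <;> linarith
    have key : |(Ds A).toReal - (Dt A).toReal| ≤
        ⨆ p : H × H, |(Ds {x | p.1.1 x ≠ p.2.1 x}).toReal - (Dt {x | p.1.1 x ≠ p.2.1 x}).toReal| := by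
      have := le_ciSup hbdd (⟨⟨htilstar, hhtil⟩, ⟨ftilstar, hftil⟩⟩ : H × H)
      simpa [hA] using this
    have := abs_le.1 key
    linarith [this.1, this.2, neg_abs_le ((Ds A).toReal - (Dt A).toReal)]
  have i2s := aux_integrable Dt mhs hft bhs' bft
  linarith [tri1, tri2, shift]
end

section
/- Let X be a measurable space and H a hypothesis space of measurable functions h : X → {0,1} ⊆ ℝ whose VC dimension is at most d (no set of d+1 points of X is shattered by H). Let D₁, D₂ be probability measures on X and let U₁ = (x_1,…,x_{n₁}) and U₂ = (y_1,…,y_{n₂}) be samples drawn i.i.d. from D₁ and D₂ respectively, with n₁ ≥ n₂. Define d_{HΔH}(D₁,D₂) := 2·sup_{h,h'∈H} |D₁({x : h(x)≠h'(x)}) − D₂({x : h(x)≠h'(x)})| and its empirical version d̂_{HΔH}(U₁,U₂) := 2·sup_{h,h'∈H} |(1/n₁)·#{i : h(x_i)≠h'(x_i)} − (1/n₂)·#{j : h(y_j)≠h'(y_j)}|. Then for any δ ∈ (0,1), with probability at least 1 − δ over the draw of the samples, d_{HΔH}(D₁,D₂) ≤ d̂_{HΔH}(U₁,U₂) + 4·√((d·log(2n₂)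 + log(2/δ))/n₂). -/
open MeasureTheory
open ProbabilityTheory Real
open scoped ENNReal NNReal

/-- Hoeffding's lemma for a Bernoulli(p) variable:
`1 - p + p * exp t ≤ exp (t * p + t ^ 2 / 8)`. -/
lemma bernoulli_mgf_le {p : ℝ} (hp0 : 0 ≤ p) (hp1 : p ≤ 1) (t : ℝ) :
    1 - p + p * Real.exp t ≤ Real.exp (t * p + t ^ 2 / 8) := by
  set g : ℝ → ℝ := fun s => 1 - p + p * Real.exp s with hg_def
  have hg_pos : ∀ s, 0 < g s := by
    intro s
    rcases lt_or_eq_of_le hp1 with h | h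
    · have : 0 ≤ p * Real.exp s := mul_nonneg hp0 (Real.exp_pos s).le
      simp only [hg_def]; linarith
    · have := Real.exp_pos s
      simp only [hg_def, h]
      linarith
  have hg_deriv : ∀ s, HasDerivAt g (p * Real.exp s) s := by
    intro s
    exact ((Real.hasDerivAt_exp s).const_mul p).const_add (1 - p)
  set G : ℝ → ℝ := fun s => p + s / 4 - p * Real.exp s / g s with hG_def
  have hG_deriv : ∀ s, HasDerivAt G (1 / 4 - p * Real.exp s * (1 - p) / (g s) ^ 2) s := by
    intro s
    have h1 : HasDerivAt (fun s => p + s / 4) (1 / 4) s := by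
      simpa using ((hasDerivAt_id s).div_const 4).const_add p
    have h2 : HasDerivAt (fun s => p * Real.exp s / g s)
        ((p * Real.exp s * g s - p * Real.exp s * (p * Real.exp s)) / (g s) ^ 2) s :=
      ((Real.hasDerivAt_exp s).const_mul p).div (hg_deriv s) (hg_pos s).ne'
    have h3 : HasDerivAt G (1 / 4 - (p * Real.exp s * g s - p * Real.exp s * (p * Real.exp s)) / (g s) ^ 2) s :=
      h1.sub h2
    convert h3 using 1
    have : p * Real.exp s * g s - p * Real.exp s * (p * Real.exp s)
        = p * Real.exp s * (1 - p) := by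
      simp only [hg_def]; ring
    rw [this]
  have hG_mono : Monotone G := by
    apply monotone_of_deriv_nonneg (fun s => (hG_deriv s).differentiableAt)
    intro s
    rw [(hG_deriv s).deriv]
    have hpos : 0 < (g s) ^ 2 := pow_pos (hg_pos s) 2
    have hgs : g s = 1 - p + p * Real.exp s := rfl
    rw [sub_nonneg, div_le_iff₀ hpos, hgs]
    nlinarith [sq_nonneg ((1 - p) - p * Real.exp s), Real.exp_pos s]
  have hG0 : G 0 = 0 := by
    simp only [hG_def, hg_def]
    norm_num
  set F : ℝ → ℝ := fun s => s * p + s ^ 2 / 8 - Real.log (g s) with hF_def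
  have hF_deriv : ∀ s, HasDerivAt F (G s) s := by
    intro s
    have h1 : HasDerivAt (fun s : ℝ => s * p + s ^ 2 / 8) (p + s / 4) s := by
      have ha : HasDerivAt (fun s : ℝ => s * p) p s := by
        simpa using (hasDerivAt_id s).mul_const p
      have hb : HasDerivAt (fun s : ℝ => s ^ 2 / 8) (s / 4) s := by
        have : HasDerivAt (fun s : ℝ => s ^ 2 / 8) (((2:ℕ):ℝ) * s ^ (2 - 1) / 8) s :=
          (hasDerivAt_pow 2 s).div_const 8
        convert this using 1
        ring
      exact ha.add hb
    have h2 : HasDerivAt (fun s => Real.log (g s)) (p * Real.exp s / g s) s :=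
      (hg_deriv s).log (hg_pos s).ne'
    have : HasDerivAt F (p + s / 4 - p * Real.exp s / g s) s := h1.sub h2
    convert this using 1
    try simp only [hG_def]
    try ring
  have hF0 : F 0 = 0 := by
    simp only [hF_def, hg_def]
    norm_num
  have hFnonneg : ∀ s, 0 ≤ F s := by
    intro s
    rcases le_total 0 s with hs | hs
    · have hmono : MonotoneOn F (Set.Ici (0 : ℝ)) := by
        apply monotoneOn_of_deriv_nonneg (convex_Ici 0)
          (fun x _ => (hF_deriv x).differentiableAt.continuousAt.continuousWithinAt)
          (fun x _ => (hF_deriv x).differentiableAt.differentiableWithinAt)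
        intro x hx
        rw [(hF_deriv x).deriv]
        rw [interior_Ici] at hx
        calc (0:ℝ) = G 0 := hG0.symm
          _ ≤ G x := hG_mono (le_of_lt hx)
      have := hmono (Set.self_mem_Ici) hs hs
      rwa [hF0] at this
    · have hmono : AntitoneOn F (Set.Iic (0 : ℝ)) := by
        apply antitoneOn_of_deriv_nonpos (convex_Iic 0)
          (fun x _ => (hF_deriv x).differentiableAt.continuousAt.continuousWithinAt)
          (fun x _ => (hF_deriv x).differentiableAt.differentiableWithinAt)
        intro x hx
        rw [(hF_deriv x).deriv]
        rw [interior_Iic] at hx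
        calc G x ≤ G 0 := hG_mono (le_of_lt hx)
          _ = 0 := hG0
      have := hmono hs (Set.self_mem_Iic) hs
      rwa [hF0] at this
  have h := hFnonneg t
  simp only [hF_def] at h
  have hlog : Real.log (g t) ≤ t * p + t ^ 2 / 8 := by linarith
  calc g t = Real.exp (Real.log (g t)) := (Real.exp_log (hg_pos t)).symm
    _ ≤ Real.exp (t * p + t ^ 2 / 8) := Real.exp_le_exp.mpr hlog

lemma hoeffding_tail {X : Type*} [MeasurableSpace X] (D : Measure X) [IsProbabilityMeasure D]
    (A : Set X) (hA : MeasurableSet A) (n : ℕ) (hn : 0 < n) (ε : ℝ) (hε : 0 ≤ ε) :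
    (Measure.pi fun _ : Fin n => D)
      {u : Fin n → X | (D A).toReal + ε ≤ (∑ i, A.indicator (fun _ => (1:ℝ)) (u i)) / n}
      ≤ ENNReal.ofReal (Real.exp (-2 * n * ε ^ 2)) := by
  set p := (D A).toReal with hp_def
  have hp0 : 0 ≤ p := ENNReal.toReal_nonneg
  have hp1 : p ≤ 1 := by
    rw [hp_def]
    exact ENNReal.toReal_le_of_le_ofReal zero_le_one (by simpa using prob_le_one (μ := D) (s := A))
  set μ : Measure (Fin n → X) := Measure.pi fun _ : Fin n => D with hμ_def
  haveI : IsProbabilityMeasure μ := by rw [hμ_def]; infer_instance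
  set S : (Fin n → X) → ℝ := fun u => ∑ i, A.indicator (fun _ => (1:ℝ)) (u i) with hS_def
  have hS_meas : Measurable S := by
    apply Finset.measurable_sum
    intro i _
    exact (measurable_const.indicator hA).comp (measurable_pi_apply i)
  have hS_le : ∀ u, S u ≤ n := by
    intro u
    calc S u ≤ ∑ _i : Fin n, (1:ℝ) := by
          apply Finset.sum_le_sum
          intro i _
          by_cases h : u i ∈ A <;> simp [h]
      _ = n := by simp
  have hnpos : (0:ℝ) < n := by exact_mod_cast hn
  set t : ℝ := 4 * ε with ht_def
  have ht : 0 ≤ t := by positivity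
  have hset : {u : Fin n → X | p + ε ≤ S u / n} = {u : Fin n → X | (p + ε) * n ≤ S u} := by
    ext u
    simp only [Set.mem_setOf_eq]
    rw [le_div_iff₀ hnpos]
  have h_int : Integrable (fun u => Real.exp (t * S u)) μ := by
    apply Integrable.mono' (integrable_const (Real.exp (t * n)))
    · exact (Real.measurable_exp.comp (hS_meas.const_mul t)).aestronglyMeasurable
    · apply ae_of_all
      intro u
      rw [Real.norm_eq_abs, Real.abs_exp]
      exact Real.exp_le_exp.mpr (mul_le_mul_of_nonneg_left (hS_le u) ht)
  have hone : ∫ x, Real.exp (t * (A.indicator (fun _ => (1:ℝ)) x)) ∂D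
      = 1 - p + p * Real.exp t := by
    have hfun : (fun x => Real.exp (t * (A.indicator (fun _ => (1:ℝ)) x)))
        = fun x => A.indicator (fun _ => Real.exp t - 1) x + 1 := by
      ext x
      by_cases hx : x ∈ A <;> simp [Set.indicator_of_mem, Set.indicator_of_notMem, hx]
    rw [hfun, integral_add ((integrable_const _).indicator hA) (integrable_const _),
      integral_indicator_const _ hA, integral_const]
    simp only [smul_eq_mul, measure_univ, ENNReal.toReal_one, one_smul]
    simp only [measureReal_def, measure_univ, ENNReal.toReal_one]
    rw [← hp_def]
    ring
  have hmgf : mgf S μ t = (1 - p + p * Real.exp t) ^ n := by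
    letI : MeasureSpace X := ⟨D⟩
    have hvol : μ = (volume : Measure (Fin n → X)) := by
      rw [hμ_def]
      rfl
    have hprod : ∀ u : Fin n → X, Real.exp (t * S u)
        = ∏ i : Fin n, Real.exp (t * (A.indicator (fun _ => (1:ℝ)) (u i))) := by
      intro u
      rw [hS_def, Finset.mul_sum, Real.exp_sum]
    rw [mgf]
    simp_rw [hprod, hvol]
    rw [MeasureTheory.volume_pi]
    rw [MeasureTheory.integral_fintype_prod_eq_pow (ι := Fin n)
      (f := fun x => Real.exp (t * (A.indicator (fun _ => (1:ℝ)) x)))]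
    rw [show (volume : Measure X) = D from rfl] at *
    rw [hone]
    simp
  have hmain := measure_ge_le_exp_mul_mgf (X := S) (μ := μ) ((p + ε) * n) ht h_int
  rw [hmgf] at hmain
  have hbase : 0 ≤ 1 - p + p * Real.exp t := by nlinarith [Real.exp_pos t]
  have hchain : Real.exp (-t * ((p + ε) * n)) * (1 - p + p * Real.exp t) ^ n
      ≤ Real.exp (-2 * n * ε ^ 2) := by
    calc Real.exp (-t * ((p + ε) * n)) * (1 - p + p * Real.exp t) ^ n
        ≤ Real.exp (-t * ((p + ε) * n)) * (Real.exp (t * p + t ^ 2 / 8)) ^ n := by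
          apply mul_le_mul_of_nonneg_left _ (Real.exp_nonneg _)
          exact pow_le_pow_left₀ hbase (bernoulli_mgf_le hp0 hp1 t) n
      _ = Real.exp (-t * ((p + ε) * n) + n * (t * p + t ^ 2 / 8)) := by
          rw [← Real.exp_nat_mul, ← Real.exp_add]
      _ = Real.exp (-2 * n * ε ^ 2) := by
          congr 1
          rw [ht_def]
          ring
  calc μ {u : Fin n → X | p + ε ≤ S u / n}
      = ENNReal.ofReal ((μ {u : Fin n → X | (p + ε) * n ≤ S u}).toReal) := by
        rw [hset, ENNReal.ofReal_toReal (measure_ne_top μ _)]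
    _ ≤ ENNReal.ofReal (Real.exp (-2 * n * ε ^ 2)) :=
        ENNReal.ofReal_le_ofReal (le_trans hmain hchain)

lemma natcard_eq_indicator_sum {X : Type*} {n : ℕ} (A : Set X) (v : Fin n → X) :
    (Nat.card {i : Fin n // v i ∈ A} : ℝ) = ∑ i, A.indicator (fun _ => (1:ℝ)) (v i) := by
  classical
  rw [Nat.card_eq_fintype_card, Fintype.card_subtype, Finset.card_filter]
  push_cast
  refine Finset.sum_congr rfl (fun i _ => ?_)
  by_cases h : v i ∈ A <;> simp [h]

lemma natcard_div_mem_Icc {n : ℕ} (hn : 0 < n) (P : Fin n → Prop) :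
    (Nat.card {i : Fin n // P i} : ℝ) / n ∈ Set.Icc (0:ℝ) 1 := by
  classical
  have hnr : (0:ℝ) < n := by exact_mod_cast hn
  constructor
  · positivity
  · rw [div_le_one hnr]
    have : Nat.card {i : Fin n // P i} ≤ n := by
      rw [Nat.card_eq_fintype_card]
      simpa using Fintype.card_subtype_le P
    exact_mod_cast this

lemma hoeffding_twoside {X : Type*} [MeasurableSpace X] (D : Measure X) [IsProbabilityMeasure D]
    (A : Set X) (hA : MeasurableSet A) (n : ℕ) (hn : 0 < n) (ε : ℝ) (hε : 0 ≤ ε) :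
    (Measure.pi fun _ : Fin n => D)
      {u : Fin n → X | ε < |(∑ i, A.indicator (fun _ => (1:ℝ)) (u i)) / n - (D A).toReal|}
      ≤ ENNReal.ofReal (Real.exp (-2 * n * ε ^ 2)) + ENNReal.ofReal (Real.exp (-2 * n * ε ^ 2)) := by
  have hnr : (0:ℝ) < n := by exact_mod_cast hn
  have hsub : {u : Fin n → X | ε < |(∑ i, A.indicator (fun _ => (1:ℝ)) (u i)) / n - (D A).toReal|} ⊆
      {u : Fin n → X | (D A).toReal + ε ≤ (∑ i, A.indicator (fun _ => (1:ℝ)) (u i)) / n}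
      ∪ {u : Fin n → X | (D Aᶜ).toReal + ε ≤ (∑ i, Aᶜ.indicator (fun _ => (1:ℝ)) (u i)) / n} := by
    intro u hu
    simp only [Set.mem_setOf_eq] at hu
    have hcompl_sum : (∑ i : Fin n, Aᶜ.indicator (fun _ => (1:ℝ)) (u i))
        = n - ∑ i : Fin n, A.indicator (fun _ => (1:ℝ)) (u i) := by
      have h : ∀ i : Fin n, Aᶜ.indicator (fun _ => (1:ℝ)) (u i)
          = 1 - A.indicator (fun _ => (1:ℝ)) (u i) := by
        intro i; by_cases h : u i ∈ A <;>
          simp [Set.indicator_of_mem, Set.indicator_of_notMem, h]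
      rw [Finset.sum_congr rfl (fun i _ => h i), Finset.sum_sub_distrib]
      simp
    have hcompl_p : (D Aᶜ).toReal = 1 - (D A).toReal := by
      rw [prob_compl_eq_one_sub hA, ENNReal.toReal_sub_of_le prob_le_one ENNReal.one_ne_top]
      simp
    rcases lt_abs.mp hu with h | h
    · left
      simp only [Set.mem_setOf_eq]
      linarith
    · right
      simp only [Set.mem_setOf_eq, hcompl_sum, hcompl_p]
      rw [sub_div, div_self hnr.ne']
      linarith
  refine le_trans (measure_mono hsub) (le_trans (measure_union_le _ _) ?_)
  exact add_le_add (hoeffding_tail D A hA n hn ε hε) (hoeffding_tail D Aᶜ hA.compl n hn ε hε)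

set_option maxHeartbeats 1000000 in
/-- Lemma 4 of the paper (concentration of the empirical `HΔH`-divergence,
adapted from Kifer et al.): if `H` has VC dimension at most `d`, then with
probability at least `1 - δ` over i.i.d. samples `U₁ ∼ D₁^{n₁}`, `U₂ ∼ D₂^{n₂}`
with `n₁ ≥ n₂`,
`d_{HΔH}(D₁,D₂) ≤ d̂_{HΔH}(U₁,U₂) + 4·√((d·log(2n₂) + log(2/δ))/n₂)`. -/
theorem empirical_HdeltaH_concentration {X : Type*} [MeasurableSpace X]
    (H : Set (X → ℝ))
    (hH : ∀ h ∈ H, Measurable h ∧ ∀ x, h x = 0 ∨ h x = 1)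
    (d : ℕ)
    (hVC : ∀ S : Finset X, S.card = d + 1 →
      ∃ y : X → ℝ, (∀ x ∈ S, y x = 0 ∨ y x = 1) ∧ ∀ h ∈ H, ∃ x ∈ S, h x ≠ y x)
    (D₁ D₂ : Measure X)
    [IsProbabilityMeasure D₁] [IsProbabilityMeasure D₂]
    (n₁ n₂ : ℕ) (hn₂ : 1 ≤ n₂) (hn : n₂ ≤ n₁)
    (δ : ℝ) (hδ : δ ∈ Set.Ioo (0 : ℝ) 1) :
    ((Measure.pi fun _ : Fin n₁ => D₁).prod (Measure.pi fun _ : Fin n₂ => D₂))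
      {U : (Fin n₁ → X) × (Fin n₂ → X) |
        (2 * ⨆ q : H × H,
            |(D₁ {x | q.1.1 x ≠ q.2.1 x}).toReal - (D₂ {x | q.1.1 x ≠ q.2.1 x}).toReal|) ≤
          (2 * ⨆ q : H × H,
            |(Nat.card {i : Fin n₁ // q.1.1 (U.1 i) ≠ q.2.1 (U.1 i)} : ℝ) / n₁ -
              (Nat.card {j : Fin n₂ // q.1.1 (U.2 j) ≠ q.2.1 (U.2 j)} : ℝ) / n₂|) +
          4 * Real.sqrt ((d * Real.log (2 * n₂) + Real.log (2 / δ)) / n₂)} ≥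
      ENNReal.ofReal (1 - δ) := by
  obtain ⟨hδ0, hδ1⟩ := hδ
  have hn₁ : 1 ≤ n₁ := le_trans hn₂ hn
  have hn₁pos : 0 < n₁ := hn₁
  have hn₂pos : 0 < n₂ := hn₂
  have hn₁r : (0:ℝ) < n₁ := by exact_mod_cast hn₁pos
  have hn₂r : (0:ℝ) < n₂ := by exact_mod_cast hn₂pos
  have hn₂r1 : (1:ℝ) ≤ n₂ := by exact_mod_cast hn₂
  have hnr : (n₂:ℝ) ≤ n₁ := by exact_mod_cast hn
  rw [ge_iff_le]
  rcases isEmpty_or_nonempty (↥H) with hHe | hHne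
  · -- H is empty : both suprema are 0 and the event is everything
    haveI : IsEmpty (↥H × ↥H) := inferInstance
    have h0 : ∀ f : ↥H × ↥H → ℝ, (⨆ q : ↥H × ↥H, f q) = 0 := by
      intro f
      rw [iSup, Set.range_eq_empty, Real.sSup_empty]
    have hsqrt : 0 ≤ Real.sqrt (((d:ℝ) * Real.log (2 * (n₂:ℝ)) + Real.log (2 / δ)) / (n₂:ℝ)) :=
      Real.sqrt_nonneg _
    have huniv : {U : (Fin n₁ → X) × (Fin n₂ → X) |
        (2 * ⨆ q : H × H,
            |(D₁ {x | q.1.1 x ≠ q.2.1 x}).toReal - (D₂ {x | q.1.1 x ≠ q.2.1 x}).toReal|) ≤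
          (2 * ⨆ q : H × H,
            |(Nat.card {i : Fin n₁ // q.1.1 (U.1 i) ≠ q.2.1 (U.1 i)} : ℝ) / n₁ -
              (Nat.card {j : Fin n₂ // q.1.1 (U.2 j) ≠ q.2.1 (U.2 j)} : ℝ) / n₂|) +
          4 * Real.sqrt ((d * Real.log (2 * n₂) + Real.log (2 / δ)) / n₂)} = Set.univ := by
      ext U
      simp only [Set.mem_setOf_eq, Set.mem_univ, iff_true]
      rw [h0, h0]
      linarith
    rw [huniv, measure_univ]
    exact ENNReal.ofReal_le_one.mpr (by linarith)
  -- main case : H nonempty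
  set μ₁ : Measure (Fin n₁ → X) := Measure.pi fun _ : Fin n₁ => D₁ with hμ₁
  set μ₂ : Measure (Fin n₂ → X) := Measure.pi fun _ : Fin n₂ => D₂ with hμ₂
  haveI : IsProbabilityMeasure μ₁ := by rw [hμ₁]; infer_instance
  haveI : IsProbabilityMeasure μ₂ := by rw [hμ₂]; infer_instance
  set B : ℝ := ((d:ℝ) * Real.log (2 * (n₂:ℝ)) + Real.log (2 / δ)) / (n₂:ℝ) with hB
  set ε : ℝ := Real.sqrt (Real.log (4 / δ) / (2 * (n₂:ℝ))) with hε_def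
  have hε0 : 0 ≤ ε := Real.sqrt_nonneg _
  have h4δpos : (0:ℝ) < 4 / δ := by positivity
  have hlog4δ : 0 < Real.log (4 / δ) := Real.log_pos (by rw [lt_div_iff₀ hδ0]; linarith)
  have hεsq : ε ^ 2 = Real.log (4 / δ) / (2 * (n₂:ℝ)) :=
    Real.sq_sqrt (by positivity)
  have hlogsplit : Real.log (4 / δ) = Real.log 2 + Real.log (2 / δ) := by
    rw [show (4:ℝ) / δ = 2 * (2 / δ) by ring,
      Real.log_mul two_ne_zero (by positivity)]
  have hlog2lt : Real.log 2 < Real.log (2 / δ) :=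
    Real.log_lt_log two_pos (by rw [lt_div_iff₀ hδ0]; linarith)
  have hdlog : 0 ≤ (d:ℝ) * Real.log (2 * (n₂:ℝ)) := by
    apply mul_nonneg (Nat.cast_nonneg d)
    apply Real.log_nonneg
    linarith
  have hεB : ε < Real.sqrt B := by
    rw [hε_def]
    apply Real.sqrt_lt_sqrt (by positivity)
    rw [hB, div_lt_div_iff₀ (by positivity) hn₂r]
    nlinarith [mul_lt_mul_of_pos_right hlog2lt hn₂r]
  -- pick a near-maximizing pair qs
  set γ : ℝ := 4 * (Real.sqrt B - ε) with hγ
  have hγpos : 0 < γ := by rw [hγ]; linarith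
  obtain ⟨qs, hqs⟩ := exists_lt_of_lt_ciSup
    (show (⨆ q : ↥H × ↥H,
        |(D₁ {x | q.1.1 x ≠ q.2.1 x}).toReal - (D₂ {x | q.1.1 x ≠ q.2.1 x}).toReal|) - γ / 2
      < ⨆ q : ↥H × ↥H,
        |(D₁ {x | q.1.1 x ≠ q.2.1 x}).toReal - (D₂ {x | q.1.1 x ≠ q.2.1 x}).toReal|
      from sub_lt_self _ (by linarith))
  set Astar : Set X := {x | qs.1.1 x ≠ qs.2.1 x} with hAstar_def
  have hmeas1 : Measurable qs.1.1 := (hH qs.1.1 qs.1.2).1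
  have hmeas2 : Measurable qs.2.1 := (hH qs.2.1 qs.2.2).1
  have hAstar : MeasurableSet Astar := by
    have heq : MeasurableSet {x | qs.1.1 x = qs.2.1 x} := measurableSet_eq_fun hmeas1 hmeas2
    exact heq.compl
  set p₁ : ℝ := (D₁ Astar).toReal with hp₁
  set p₂ : ℝ := (D₂ Astar).toReal with hp₂
  set G₁ : Set (Fin n₁ → X) :=
    {u : Fin n₁ → X | |(∑ i, Astar.indicator (fun _ => (1:ℝ)) (u i)) / n₁ - p₁| ≤ ε} with hG₁def
  set G₂ : Set (Fin n₂ → X) :=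
    {u : Fin n₂ → X | |(∑ i, Astar.indicator (fun _ => (1:ℝ)) (u i)) / n₂ - p₂| ≤ ε} with hG₂def
  have hcnt_meas : ∀ m : ℕ, Measurable (fun u : Fin m → X =>
      ∑ i, Astar.indicator (fun _ => (1:ℝ)) (u i)) := by
    intro m
    apply Finset.measurable_sum
    intro i _
    exact (measurable_const.indicator hAstar).comp (measurable_pi_apply i)
  have hG₁meas : MeasurableSet G₁ := by
    rw [hG₁def]
    exact measurableSet_le ((((hcnt_meas n₁).div_const _).sub measurable_const).abs)
      measurable_const
  have hG₂meas : MeasurableSet G₂ := by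
    rw [hG₂def]
    exact measurableSet_le ((((hcnt_meas n₂).div_const _).sub measurable_const).abs)
      measurable_const
  -- bound the measure of the complements
  have hexp_eq : Real.exp (-2 * (n₂:ℝ) * ε ^ 2) = δ / 4 := by
    rw [hεsq, show -2 * (n₂:ℝ) * (Real.log (4 / δ) / (2 * (n₂:ℝ))) = -Real.log (4 / δ) by
      field_simp
      try ring]
    rw [Real.exp_neg, Real.exp_log h4δpos, inv_div]
  have hexp_le : Real.exp (-2 * (n₁:ℝ) * ε ^ 2) ≤ δ / 4 := by
    rw [← hexp_eq]
    apply Real.exp_le_exp.mpr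
    nlinarith [sq_nonneg ε]
  have htail₁ : μ₁ G₁ᶜ ≤ ENNReal.ofReal (δ / 2) := by
    have hc : G₁ᶜ = {u : Fin n₁ → X |
        ε < |(∑ i, Astar.indicator (fun _ => (1:ℝ)) (u i)) / n₁ - (D₁ Astar).toReal|} := by
      rw [hG₁def]
      ext u
      simp [not_le, hp₁]
    rw [hc, hμ₁]
    refine le_trans (hoeffding_twoside D₁ Astar hAstar n₁ hn₁pos ε hε0) ?_
    rw [← ENNReal.ofReal_add (Real.exp_nonneg _) (Real.exp_nonneg _)]
    apply ENNReal.ofReal_le_ofReal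
    linarith [hexp_le]
  have htail₂ : μ₂ G₂ᶜ ≤ ENNReal.ofReal (δ / 2) := by
    have hc : G₂ᶜ = {u : Fin n₂ → X |
        ε < |(∑ i, Astar.indicator (fun _ => (1:ℝ)) (u i)) / n₂ - (D₂ Astar).toReal|} := by
      rw [hG₂def]
      ext u
      simp [not_le, hp₂]
    rw [hc, hμ₂]
    refine le_trans (hoeffding_twoside D₂ Astar hAstar n₂ hn₂pos ε hε0) ?_
    rw [← ENNReal.ofReal_add (Real.exp_nonneg _) (Real.exp_nonneg _)]
    apply ENNReal.ofReal_le_ofReal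
    rw [hexp_eq]
    linarith
  have hG₁low : ENNReal.ofReal (1 - δ / 2) ≤ μ₁ G₁ := by
    have h1 := prob_compl_eq_one_sub (μ := μ₁) hG₁meas
    have h2 : (1:ℝ≥0∞) - μ₁ G₁ ≤ ENNReal.ofReal (δ / 2) := h1 ▸ htail₁
    have h3 : (1:ℝ≥0∞) ≤ ENNReal.ofReal (δ / 2) + μ₁ G₁ := tsub_le_iff_right.mp h2
    have h4 : (1:ℝ≥0∞) - ENNReal.ofReal (δ / 2) ≤ μ₁ G₁ := tsub_le_iff_left.mpr h3
    calc ENNReal.ofReal (1 - δ / 2) = 1 - ENNReal.ofReal (δ / 2) := by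
          rw [← ENNReal.ofReal_one, ← ENNReal.ofReal_sub _ (by positivity)]
      _ ≤ μ₁ G₁ := h4
  have hG₂low : ENNReal.ofReal (1 - δ / 2) ≤ μ₂ G₂ := by
    have h1 := prob_compl_eq_one_sub (μ := μ₂) hG₂meas
    have h2 : (1:ℝ≥0∞) - μ₂ G₂ ≤ ENNReal.ofReal (δ / 2) := h1 ▸ htail₂
    have h3 : (1:ℝ≥0∞) ≤ ENNReal.ofReal (δ / 2) + μ₂ G₂ := tsub_le_iff_right.mp h2
    have h4 : (1:ℝ≥0∞) - ENNReal.ofReal (δ / 2) ≤ μ₂ G₂ := tsub_le_iff_left.mpr h3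
    calc ENNReal.ofReal (1 - δ / 2) = 1 - ENNReal.ofReal (δ / 2) := by
          rw [← ENNReal.ofReal_one, ← ENNReal.ofReal_sub _ (by positivity)]
      _ ≤ μ₂ G₂ := h4
  -- the good event implies the desired inequality
  have hsubE : G₁ ×ˢ G₂ ⊆ {U : (Fin n₁ → X) × (Fin n₂ → X) |
        (2 * ⨆ q : H × H,
            |(D₁ {x | q.1.1 x ≠ q.2.1 x}).toReal - (D₂ {x | q.1.1 x ≠ q.2.1 x}).toReal|) ≤
          (2 * ⨆ q : H × H,
            |(Nat.card {i : Fin n₁ // q.1.1 (U.1 i) ≠ q.2.1 (U.1 i)} : ℝ) / n₁ -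
              (Nat.card {j : Fin n₂ // q.1.1 (U.2 j) ≠ q.2.1 (U.2 j)} : ℝ) / n₂|) +
          4 * Real.sqrt ((d * Real.log (2 * n₂) + Real.log (2 / δ)) / n₂)} := by
    intro U hU
    rw [Set.mem_prod] at hU
    obtain ⟨hU1, hU2⟩ := hU
    rw [hG₁def, Set.mem_setOf_eq] at hU1
    rw [hG₂def, Set.mem_setOf_eq] at hU2
    simp only [Set.mem_setOf_eq]
    set e₁ : ℝ := (∑ i, Astar.indicator (fun _ => (1:ℝ)) (U.1 i)) / n₁ with he₁
    set e₂ : ℝ := (∑ j, Astar.indicator (fun _ => (1:ℝ)) (U.2 j)) / n₂ with he₂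
    -- the empirical value of the chosen pair
    have hc₁ : (Nat.card {i : Fin n₁ // qs.1.1 (U.1 i) ≠ qs.2.1 (U.1 i)} : ℝ)
        = ∑ i : Fin n₁, Astar.indicator (fun _ => (1:ℝ)) (U.1 i) := by
      have hcast : Nat.card {i : Fin n₁ // qs.1.1 (U.1 i) ≠ qs.2.1 (U.1 i)}
          = Nat.card {i : Fin n₁ // U.1 i ∈ Astar} :=
        Nat.card_congr (Equiv.subtypeEquivRight (fun i => Iff.rfl))
      rw [hcast, natcard_eq_indicator_sum]
    have hc₂ : (Nat.card {j : Fin n₂ // qs.1.1 (U.2 j) ≠ qs.2.1 (U.2 j)} : ℝ)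
        = ∑ j : Fin n₂, Astar.indicator (fun _ => (1:ℝ)) (U.2 j) := by
      have hcast : Nat.card {j : Fin n₂ // qs.1.1 (U.2 j) ≠ qs.2.1 (U.2 j)}
          = Nat.card {j : Fin n₂ // U.2 j ∈ Astar} :=
        Nat.card_congr (Equiv.subtypeEquivRight (fun j => Iff.rfl))
      rw [hcast, natcard_eq_indicator_sum]
    have hEbdd : BddAbove (Set.range (fun q : ↥H × ↥H =>
        |(Nat.card {i : Fin n₁ // q.1.1 (U.1 i) ≠ q.2.1 (U.1 i)} : ℝ) / n₁ -
          (Nat.card {j : Fin n₂ // q.1.1 (U.2 j) ≠ q.2.1 (U.2 j)} : ℝ) / n₂|)) := by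
      refine ⟨2, ?_⟩
      rintro _ ⟨q, rfl⟩
      obtain ⟨ha0, ha1⟩ := natcard_div_mem_Icc hn₁pos (fun i => q.1.1 (U.1 i) ≠ q.2.1 (U.1 i))
      obtain ⟨hb0, hb1⟩ := natcard_div_mem_Icc hn₂pos (fun j => q.1.1 (U.2 j) ≠ q.2.1 (U.2 j))
      rw [abs_le]
      constructor <;> linarith
    have hqsle : |(Nat.card {i : Fin n₁ // qs.1.1 (U.1 i) ≠ qs.2.1 (U.1 i)} : ℝ) / n₁ -
          (Nat.card {j : Fin n₂ // qs.1.1 (U.2 j) ≠ qs.2.1 (U.2 j)} : ℝ) / n₂|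
        ≤ ⨆ q : ↥H × ↥H,
          |(Nat.card {i : Fin n₁ // q.1.1 (U.1 i) ≠ q.2.1 (U.1 i)} : ℝ) / n₁ -
            (Nat.card {j : Fin n₂ // q.1.1 (U.2 j) ≠ q.2.1 (U.2 j)} : ℝ) / n₂| :=
      le_ciSup hEbdd qs
    rw [hc₁, hc₂, ← he₁, ← he₂] at hqsle
    have htri : |p₁ - p₂| ≤ |e₁ - e₂| + |e₁ - p₁| + |e₂ - p₂| := by
      have h3 : p₁ - p₂ = -(e₁ - p₁) + (e₁ - e₂) + (e₂ - p₂) := by ring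
      calc |p₁ - p₂| = |(-(e₁ - p₁) + (e₁ - e₂)) + (e₂ - p₂)| := by rw [← h3]
        _ ≤ |(-(e₁ - p₁) + (e₁ - e₂))| + |e₂ - p₂| := abs_add_le _ _
        _ ≤ |(-(e₁ - p₁))| + |e₁ - e₂| + |e₂ - p₂| := by
            have := abs_add_le (-(e₁ - p₁)) (e₁ - e₂)
            linarith
        _ = |e₁ - e₂| + |e₁ - p₁| + |e₂ - p₂| := by rw [abs_neg]; ring
    have hqs' : (⨆ q : ↥H × ↥H,
        |(D₁ {x | q.1.1 x ≠ q.2.1 x}).toReal - (D₂ {x | q.1.1 x ≠ q.2.1 x}).toReal|) - γ / 2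
        < |p₁ - p₂| := hqs
    have hγhalf : γ / 2 = 2 * Real.sqrt B - 2 * ε := by rw [hγ]; ring
    linarith
  -- put everything together
  calc ENNReal.ofReal (1 - δ)
      ≤ ENNReal.ofReal ((1 - δ / 2) * (1 - δ / 2)) :=
        ENNReal.ofReal_le_ofReal (by nlinarith)
    _ = ENNReal.ofReal (1 - δ / 2) * ENNReal.ofReal (1 - δ / 2) :=
        ENNReal.ofReal_mul (by linarith)
    _ ≤ μ₁ G₁ * μ₂ G₂ := mul_le_mul' hG₁low hG₂low
    _ = (μ₁.prod μ₂) (G₁ ×ˢ G₂) := (Measure.prod_prod _ _).symm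
    _ ≤ _ := measure_mono hsubE
end

section
/- Let X be a measurable space and H a hypothesis space of measurable functions h : X → {0,1} ⊆ ℝ with VC dimension at most d. Let D_s, D_t be probability measures on X and f_t : X → [0,1] a measurable target labeling function. Let U_s and U_t be samples of sizes m and n drawn i.i.d. from D_s and D_t respectively, with m ≥ n. Let h* ∈ H minimize the target risk F_{D_t}(h, f_t) over h ∈ H, and let (h̃*, f̃*) ∈ H × H minimize the source disagreement F_{D_s}(h, f) over pairs (h,f) ∈ H × H. Then for any fixed h ∈ H and any δ ∈ (0,1), with probability at least 1 − δ over the draw of the samples: F_{D_t}(h, f_t) − F_{D_t}(h*, f_t) ≤ (3/2)·d̂_{HΔH}(U_s, U_t) + F̂_{U_t}(h, h̃*) + F_{D_t}(h*, f̃*) + F_{D_s}(h̃*, f̃*) + √(log(8/δ)/(2n)) + 12·√((2d·log(2n) + log(8/δ))/n). -/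
open MeasureTheory

section ERBHelpers

open Real


lemma erb_integrable_of_abs_le {X : Type*} [MeasurableSpace X] (ν : Measure X)
    [IsProbabilityMeasure ν] {φ : X → ℝ} {C : ℝ} (hm : Measurable φ)
    (hb : ∀ x, |φ x| ≤ C) : Integrable φ ν := by
  refine (integrable_const C).mono' hm.aestronglyMeasurable (ae_of_all _ fun x => ?_)
  simpa [Real.norm_eq_abs] using hb x

lemma erb_exp_bound {z s : ℝ} (hz : |z| ≤ 1) :
    Real.exp (s * z) ≤ Real.cosh s + z * Real.sinh s := by
  have h1 : 0 ≤ (1 + z) / 2 := by have := neg_abs_le z; linarith [abs_le.1 hz]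
  have h2 : 0 ≤ (1 - z) / 2 := by linarith [(abs_le.1 hz).2]
  have h3 : (1 + z) / 2 + (1 - z) / 2 = 1 := by ring
  have := convexOn_exp.2 (Set.mem_univ s) (Set.mem_univ (-s)) h1 h2 h3
  simp only [smul_eq_mul] at this
  have he : (1 + z) / 2 * s + (1 - z) / 2 * -s = s * z := by ring
  rw [he] at this
  refine this.trans (le_of_eq ?_)
  rw [Real.cosh_eq, Real.sinh_eq]
  ring

lemma erb_mgf_bound {X : Type*} [MeasurableSpace X] (ν : Measure X)
    [IsProbabilityMeasure ν] {Z : X → ℝ} (hZm : Measurable Z) (hZb : ∀ x, |Z x| ≤ 1)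
    (hZ0 : ∫ x, Z x ∂ν = 0) (s : ℝ) :
    ∫ x, Real.exp (s * Z x) ∂ν ≤ Real.exp (s ^ 2 / 2) := by
  have hiZ : Integrable Z ν := erb_integrable_of_abs_le ν hZm hZb
  have hie : Integrable (fun x => Real.exp (s * Z x)) ν := by
    refine erb_integrable_of_abs_le (C := Real.exp |s|) ν ((hZm.const_mul s).exp) fun x => ?_
    rw [abs_of_pos (Real.exp_pos _)]
    refine Real.exp_le_exp.2 ?_
    calc s * Z x ≤ |s * Z x| := le_abs_self _
      _ = |s| * |Z x| := abs_mul _ _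
      _ ≤ |s| * 1 := by have := hZb x; nlinarith [abs_nonneg s]
      _ = |s| := mul_one _
  calc ∫ x, Real.exp (s * Z x) ∂ν ≤ ∫ x, (Real.cosh s + Z x * Real.sinh s) ∂ν := by
        refine integral_mono hie ?_ fun x => erb_exp_bound (hZb x)
        exact (integrable_const _).add (hiZ.mul_const _)
    _ = Real.cosh s := by
        rw [integral_add (integrable_const _) (hiZ.mul_const _), integral_const,
          integral_mul_const, hZ0]
        simp
    _ ≤ Real.exp (s ^ 2 / 2) := Real.cosh_le_exp_half_sq s

lemma erb_hoeff_tail {X : Type*} [MeasurableSpace X] (ν : Measure X)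
    [IsProbabilityMeasure ν] (k : ℕ) {Z : X → ℝ} (hZm : Measurable Z)
    (hZb : ∀ x, |Z x| ≤ 1) (hZ0 : ∫ x, Z x ∂ν = 0) {s : ℝ} (hs : 0 ≤ s) :
    (Measure.pi fun _ : Fin k => ν) {u | (k : ℝ) * s ≤ ∑ j, Z (u j)} ≤
      ENNReal.ofReal (Real.exp (-(k * s ^ 2) / 2)) := by
  letI : MeasureSpace X := ⟨ν⟩
  set pk : Measure (Fin k → X) := Measure.pi fun _ : Fin k => ν with hpk
  haveI : IsProbabilityMeasure pk := by
    rw [hpk]; infer_instance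
  set S : (Fin k → X) → ℝ := fun u => ∑ j, Z (u j) with hS
  have hSm : Measurable S := by
    apply Finset.measurable_sum
    exact fun j _ => hZm.comp (measurable_pi_apply j)
  have hint : Integrable (fun u => Real.exp (s * S u)) pk := by
    refine erb_integrable_of_abs_le (C := Real.exp (s * k)) pk ((hSm.const_mul s).exp)
      fun u => ?_
    rw [abs_of_pos (Real.exp_pos _)]
    refine Real.exp_le_exp.2 (mul_le_mul_of_nonneg_left ?_ hs)
    calc S u ≤ ∑ j : Fin k, (1 : ℝ) :=
          Finset.sum_le_sum fun j _ => (le_abs_self _).trans (hZb _)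
      _ = k := by simp
  have hchern := ProbabilityTheory.measure_ge_le_exp_mul_mgf (μ := pk) (X := S)
    ((k : ℝ) * s) hs hint
  have hmgf : ProbabilityTheory.mgf S pk s = (∫ x, Real.exp (s * Z x) ∂ν) ^ k := by
    have : ∀ u : Fin k → X, Real.exp (s * S u) = ∏ j : Fin k, Real.exp (s * Z (u j)) := by
      intro u
      rw [hS]
      simp only [Finset.mul_sum, Real.exp_sum]
    rw [ProbabilityTheory.mgf]
    calc ∫ u, Real.exp (s * S u) ∂pk = ∫ u : Fin k → X, ∏ j : Fin k, Real.exp (s * Z (u j)) := by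
          exact integral_congr_ae (ae_of_all _ this)
      _ = (∫ x, Real.exp (s * Z x) ∂ν) ^ k := by
          have := MeasureTheory.integral_fintype_prod_eq_pow (ι := Fin k) (μ := ν)
            (fun x => Real.exp (s * Z x))
          simp only [Fintype.card_fin] at this
          exact this
  have hJ : (∫ x, Real.exp (s * Z x) ∂ν) ^ k ≤ Real.exp (s ^ 2 / 2) ^ k := by
    refine pow_le_pow_left₀ (integral_nonneg fun x => (Real.exp_pos _).le) ?_ k
    exact erb_mgf_bound ν hZm hZb hZ0 s
  have hfinal : (pk {u | (k : ℝ) * s ≤ S u}).toReal ≤ Real.exp (-(k * s ^ 2) / 2) := by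
    calc (pk {u | (k : ℝ) * s ≤ S u}).toReal
        ≤ Real.exp (-s * ((k : ℝ) * s)) * ProbabilityTheory.mgf S pk s := hchern
      _ ≤ Real.exp (-s * ((k : ℝ) * s)) * Real.exp (s ^ 2 / 2) ^ k := by
          rw [hmgf]
          exact mul_le_mul_of_nonneg_left hJ (Real.exp_pos _).le
      _ = Real.exp (-(k * s ^ 2) / 2) := by
          rw [← Real.exp_nat_mul, ← Real.exp_add]
          congr 1
          ring
  calc pk {u | (k : ℝ) * s ≤ S u} = ENNReal.ofReal ((pk {u | (k : ℝ) * s ≤ S u}).toReal) :=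
        (ENNReal.ofReal_toReal (measure_ne_top _ _)).symm
    _ ≤ ENNReal.ofReal (Real.exp (-(k * s ^ 2) / 2)) := ENNReal.ofReal_le_ofReal hfinal

section
variable {X : Type*} [MeasurableSpace X] (ν : Measure X) [IsProbabilityMeasure ν]
  {g : X → ℝ}

lemma erb_mean_mem (hm : Measurable g) (hb : ∀ x, 0 ≤ g x ∧ g x ≤ 1) :
    0 ≤ ∫ x, g x ∂ν ∧ ∫ x, g x ∂ν ≤ 1 := by
  constructor
  · exact integral_nonneg fun x => (hb x).1
  · have h1 : ∫ x, g x ∂ν ≤ ∫ _, (1 : ℝ) ∂ν := by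
      refine integral_mono (erb_integrable_of_abs_le (C := 1) ν hm fun x => ?_)
        (integrable_const _) fun x => (hb x).2
      rw [abs_le]; exact ⟨by linarith [(hb x).1], (hb x).2⟩
    simpa using h1

lemma erb_emp_lower (hm : Measurable g) (hb : ∀ x, 0 ≤ g x ∧ g x ≤ 1) (k : ℕ) (hk : 0 < k) {s : ℝ} (hs : 0 ≤ s) :
    (Measure.pi fun _ : Fin k => ν)
      {u | (∑ j, g (u j)) / k ≤ (∫ x, g x ∂ν) - s} ≤
      ENNReal.ofReal (Real.exp (-(k * s ^ 2) / 2)) := by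
  obtain ⟨hm0, hm1⟩ := erb_mean_mem ν hm hb
  set I := ∫ x, g x ∂ν with hI
  have hZm : Measurable fun x => I - g x := measurable_const.sub hm
  have hZb : ∀ x, |I - g x| ≤ 1 := fun x => by
    rw [abs_le]; have := hb x; constructor <;> linarith [this.1, this.2]
  have hZ0 : ∫ x, (I - g x) ∂ν = 0 := by
    rw [integral_sub (integrable_const _)
      (erb_integrable_of_abs_le (C := 1) ν hm fun x => by
        rw [abs_le]; exact ⟨by linarith [(hb x).1], (hb x).2⟩), integral_const]
    simp [hI]
  refine le_trans (measure_mono ?_) (erb_hoeff_tail ν k hZm hZb hZ0 hs)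
  intro u hu
  simp only [Set.mem_setOf_eq] at hu ⊢
  have hk' : (0 : ℝ) < k := by exact_mod_cast hk
  rw [div_le_iff₀ hk'] at hu
  have : ∑ j, (I - g (u j)) = k * I - ∑ j, g (u j) := by
    rw [Finset.sum_sub_distrib]; simp [mul_comm]
  rw [this]; nlinarith

lemma erb_emp_upper (hm : Measurable g) (hb : ∀ x, 0 ≤ g x ∧ g x ≤ 1) (k : ℕ) (hk : 0 < k) {s : ℝ} (hs : 0 ≤ s) :
    (Measure.pi fun _ : Fin k => ν)
      {u | (∫ x, g x ∂ν) + s ≤ (∑ j, g (u j)) / k} ≤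
      ENNReal.ofReal (Real.exp (-(k * s ^ 2) / 2)) := by
  obtain ⟨hm0, hm1⟩ := erb_mean_mem ν hm hb
  set I := ∫ x, g x ∂ν with hI
  have hZm : Measurable fun x => g x - I := hm.sub measurable_const
  have hZb : ∀ x, |g x - I| ≤ 1 := fun x => by
    rw [abs_le]; have := hb x; constructor <;> linarith [this.1, this.2]
  have hZ0 : ∫ x, (g x - I) ∂ν = 0 := by
    rw [integral_sub (erb_integrable_of_abs_le (C := 1) ν hm fun x => by
        rw [abs_le]; exact ⟨by linarith [(hb x).1], (hb x).2⟩) (integrable_const _),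
      integral_const]
    simp [hI]
  refine le_trans (measure_mono ?_) (erb_hoeff_tail ν k hZm hZb hZ0 hs)
  intro u hu
  simp only [Set.mem_setOf_eq] at hu ⊢
  have hk' : (0 : ℝ) < k := by exact_mod_cast hk
  rw [le_div_iff₀ hk'] at hu
  have : ∑ j, (g (u j) - I) = ∑ j, g (u j) - k * I := by
    rw [Finset.sum_sub_distrib]; simp [mul_comm]
  rw [this]; nlinarith
end

end ERBHelpers

open Real in
/-- Theorem 3 of the paper (the formal excess risk bound): with probability at
least `1 - δ` over i.i.d. samples `U_s ∼ D_s^m`, `U_t ∼ D_t^n` with `m ≥ n`,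
`F_{D_t}(h, f_t) - F_{D_t}(h*, f_t) ≤ (3/2)·d̂_{HΔH}(U_s,U_t) + F̂_{U_t}(h, h̃*)
  + F_{D_t}(h*, f̃*) + F_{D_s}(h̃*, f̃*) + √(log(8/δ)/(2n))
  + 12·√((2d·log(2n) + log(8/δ))/n)`,
where `h*` minimizes the target risk and `(h̃*, f̃*)` minimizes the source
disagreement, and `H` has VC dimension at most `d`. -/
theorem excess_risk_bound {X : Type*} [MeasurableSpace X]
    (H : Set (X → ℝ))
    (hH : ∀ h ∈ H, Measurable h ∧ ∀ x, h x = 0 ∨ h x = 1)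
    (d : ℕ)
    (hVC : ∀ S : Finset X, S.card = d + 1 →
      ∃ y : X → ℝ, (∀ x ∈ S, y x = 0 ∨ y x = 1) ∧ ∀ h ∈ H, ∃ x ∈ S, h x ≠ y x)
    (Ds Dt : Measure X)
    [IsProbabilityMeasure Ds] [IsProbabilityMeasure Dt]
    (ft : X → ℝ) (hft : Measurable ft) (hft01 : ∀ x, ft x ∈ Set.Icc (0 : ℝ) 1)
    (m n : ℕ) (hn : 1 ≤ n) (hmn : n ≤ m)
    (hstar : X → ℝ) (hhstar : hstar ∈ H)
    (hstar_min : ∀ h' ∈ H, (∫ x, |hstar x - ft x| ∂Dt) ≤ ∫ x, |h' x - ft x| ∂Dt)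
    (htilstar ftilstar : X → ℝ) (hhtil : htilstar ∈ H) (hftil : ftilstar ∈ H)
    (htil_min : ∀ h' ∈ H, ∀ f' ∈ H,
      (∫ x, |htilstar x - ftilstar x| ∂Ds) ≤ ∫ x, |h' x - f' x| ∂Ds)
    (h : X → ℝ) (hh : h ∈ H)
    (δ : ℝ) (hδ : δ ∈ Set.Ioo (0 : ℝ) 1) :
    ((Measure.pi fun _ : Fin m => Ds).prod (Measure.pi fun _ : Fin n => Dt))
      {U : (Fin m → X) × (Fin n → X) |
        (∫ x, |h x - ft x| ∂Dt) - (∫ x, |hstar x - ft x| ∂Dt) ≤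
          (3 / 2) *
            (2 * ⨆ q : H × H,
              |(Nat.card {i : Fin m // q.1.1 (U.1 i) ≠ q.2.1 (U.1 i)} : ℝ) / m -
                (Nat.card {j : Fin n // q.1.1 (U.2 j) ≠ q.2.1 (U.2 j)} : ℝ) / n|) +
          (∑ j : Fin n, |h (U.2 j) - htilstar (U.2 j)|) / n +
          (∫ x, |hstar x - ftilstar x| ∂Dt) +
          (∫ x, |htilstar x - ftilstar x| ∂Ds) +
          Real.sqrt (Real.log (8 / δ) / (2 * n)) +
          12 * Real.sqrt ((2 * d * Real.log (2 * n) + Real.log (8 / δ)) / n)} ≥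
      ENNReal.ofReal (1 - δ) := by
  classical
  obtain ⟨hδ0, hδ1⟩ := hδ
  have hm1 : 1 ≤ m := le_trans hn hmn
  have hn0 : (0:ℝ) < n := by exact_mod_cast hn
  have hm0 : (0:ℝ) < m := by exact_mod_cast hm1
  -- measurability and boundedness facts
  have hmh := (hH h hh).1
  have hmht := (hH htilstar hhtil).1
  have hmft' := (hH ftilstar hftil).1
  have hmhs := (hH hstar hhstar).1
  have h01Icc : ∀ p : X → ℝ, (∀ x, p x = 0 ∨ p x = 1) → ∀ x, p x ∈ Set.Icc (0:ℝ) 1 := by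
    intro p hp x; rcases hp x with h0 | h0 <;> rw [h0] <;> constructor <;> norm_num
  have hb01 : ∀ p q : X → ℝ, (∀ x, p x ∈ Set.Icc (0:ℝ) 1) → (∀ x, q x ∈ Set.Icc (0:ℝ) 1) →
      ∀ x, 0 ≤ |p x - q x| ∧ |p x - q x| ≤ 1 := by
    intro p q hp hq x
    refine ⟨abs_nonneg _, ?_⟩
    have h1 := hp x; have h2 := hq x
    rw [abs_le]
    exact ⟨by linarith [h1.1, h2.2], by linarith [h1.2, h2.1]⟩
  set g1 : X → ℝ := fun x => |h x - htilstar x| with hg1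
  set g2 : X → ℝ := fun x => |htilstar x - ftilstar x| with hg2
  have hg1m : Measurable g1 := (hmh.sub hmht).abs
  have hg2m : Measurable g2 := (hmht.sub hmft').abs
  have hg1b : ∀ x, 0 ≤ g1 x ∧ g1 x ≤ 1 :=
    hb01 h htilstar (h01Icc _ (hH h hh).2) (h01Icc _ (hH htilstar hhtil).2)
  have hg2b : ∀ x, 0 ≤ g2 x ∧ g2 x ≤ 1 :=
    hb01 htilstar ftilstar (h01Icc _ (hH htilstar hhtil).2) (h01Icc _ (hH ftilstar hftil).2)
  set L := Real.log (8 / δ) with hL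
  have hLpos : 0 < L := Real.log_pos (by rw [lt_div_iff₀ hδ0]; linarith)
  set t : ℝ := Real.sqrt (2 * L / n) with ht
  set tm : ℝ := Real.sqrt (2 * L / m) with htm
  have ht0 : 0 ≤ t := Real.sqrt_nonneg _
  have htm0 : 0 ≤ tm := Real.sqrt_nonneg _
  have htail : ∀ k : ℕ, 0 < k →
      Real.exp (-((k:ℝ) * Real.sqrt (2 * L / k) ^ 2) / 2) = δ / 8 := by
    intro k hk
    have hk0 : (0:ℝ) < k := by exact_mod_cast hk
    rw [Real.sq_sqrt (by positivity)]
    have he : -((k:ℝ) * (2 * L / k)) / 2 = -L := by field_simp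
    rw [he, hL, ← Real.log_inv, Real.exp_log (by positivity)]
    rw [inv_div]
  -- the bad events
  set B1 : Set (Fin n → X) := {v | (∑ j, g1 (v j)) / n ≤ (∫ x, g1 x ∂Dt) - t} with hB1
  set B2 : Set (Fin n → X) := {v | (∑ j, g2 (v j)) / n ≤ (∫ x, g2 x ∂Dt) - t} with hB2
  set B3 : Set (Fin m → X) := {w | (∫ x, g2 x ∂Ds) + tm ≤ (∑ i, g2 (w i)) / m} with hB3
  have hB1m : MeasurableSet B1 :=
    measurableSet_le ((Finset.measurable_sum _ fun j _ =>
      hg1m.comp (measurable_pi_apply j)).div_const _) measurable_const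
  have hB2m : MeasurableSet B2 :=
    measurableSet_le ((Finset.measurable_sum _ fun j _ =>
      hg2m.comp (measurable_pi_apply j)).div_const _) measurable_const
  have hB3m : MeasurableSet B3 :=
    measurableSet_le measurable_const ((Finset.measurable_sum _ fun j _ =>
      hg2m.comp (measurable_pi_apply j)).div_const _)
  have hμB1 : (Measure.pi fun _ : Fin n => Dt) B1 ≤ ENNReal.ofReal (δ / 8) := by
    have := erb_emp_lower Dt hg1m hg1b n (by omega) ht0
    rwa [ht, htail n (by omega)] at this
  have hμB2 : (Measure.pi fun _ : Fin n => Dt) B2 ≤ ENNReal.ofReal (δ / 8) := by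
    have := erb_emp_lower Dt hg2m hg2b n (by omega) ht0
    rwa [ht, htail n (by omega)] at this
  have hμB3 : (Measure.pi fun _ : Fin m => Ds) B3 ≤ ENNReal.ofReal (δ / 8) := by
    have := erb_emp_upper Ds hg2m hg2b m (by omega) htm0
    rwa [htm, htail m (by omega)] at this
  set μ := (Measure.pi fun _ : Fin m => Ds).prod (Measure.pi fun _ : Fin n => Dt) with hμ
  haveI : IsProbabilityMeasure μ := by rw [hμ]; infer_instance
  set Bad : Set ((Fin m → X) × (Fin n → X)) :=
    Prod.fst ⁻¹' B3 ∪ (Prod.snd ⁻¹' B1 ∪ Prod.snd ⁻¹' B2) with hBad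
  have hBadm : MeasurableSet Bad :=
    ((hB3m.preimage measurable_fst).union
      ((hB1m.preimage measurable_snd).union (hB2m.preimage measurable_snd)))
  have hfst : ∀ B : Set (Fin m → X), MeasurableSet B →
      μ (Prod.fst ⁻¹' B) = (Measure.pi fun _ : Fin m => Ds) B := by
    intro B hB
    rw [← Measure.fst_apply hB, hμ, Measure.fst_prod]
  have hsnd : ∀ B : Set (Fin n → X), MeasurableSet B →
      μ (Prod.snd ⁻¹' B) = (Measure.pi fun _ : Fin n => Dt) B := by
    intro B hB
    rw [← Measure.snd_apply hB, hμ, Measure.snd_prod]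
  have hμBad : μ Bad ≤ ENNReal.ofReal δ := by
    calc μ Bad ≤ μ (Prod.fst ⁻¹' B3) + (μ (Prod.snd ⁻¹' B1) + μ (Prod.snd ⁻¹' B2)) :=
          (measure_union_le _ _).trans (add_le_add le_rfl (measure_union_le _ _))
      _ ≤ ENNReal.ofReal (δ / 8) + (ENNReal.ofReal (δ / 8) + ENNReal.ofReal (δ / 8)) := by
          rw [hfst B3 hB3m, hsnd B1 hB1m, hsnd B2 hB2m]
          gcongr <;> assumption
      _ = ENNReal.ofReal (δ / 8 + (δ / 8 + δ / 8)) := by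
          rw [ENNReal.ofReal_add (by positivity) (by positivity),
            ENNReal.ofReal_add (by positivity) (by positivity)]
      _ ≤ ENNReal.ofReal δ := ENNReal.ofReal_le_ofReal (by linarith)
  -- it suffices to show the complement of Bad is contained in the good event
  refine le_trans ?_ (measure_mono (?_ : Badᶜ ⊆ _))
  · rw [prob_compl_eq_one_sub hBadm]
    refine ENNReal.le_sub_of_add_le_left (measure_ne_top μ Bad) ?_
    calc μ Bad + ENNReal.ofReal (1 - δ) ≤ ENNReal.ofReal δ + ENNReal.ofReal (1 - δ) := by
          gcongr
      _ = 1 := by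
          rw [← ENNReal.ofReal_add hδ0.le (by linarith)]
          norm_num
  · intro U hU
    simp only [hBad, Set.mem_compl_iff, Set.mem_union, Set.mem_preimage, not_or] at hU
    obtain ⟨hU3, hU1, hU2⟩ := hU
    rw [hB1, Set.mem_setOf_eq] at hU1
    rw [hB2, Set.mem_setOf_eq] at hU2
    rw [hB3, Set.mem_setOf_eq] at hU3
    push_neg at hU1 hU2 hU3
    simp only [Set.mem_setOf_eq]
    -- the supremum term
    set A : ℝ := ⨆ q : H × H,
      |(Nat.card {i : Fin m // q.1.1 (U.1 i) ≠ q.2.1 (U.1 i)} : ℝ) / m -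
        (Nat.card {j : Fin n // q.1.1 (U.2 j) ≠ q.2.1 (U.2 j)} : ℝ) / n| with hA
    have hbdd : BddAbove (Set.range fun q : H × H =>
        |(Nat.card {i : Fin m // q.1.1 (U.1 i) ≠ q.2.1 (U.1 i)} : ℝ) / m -
          (Nat.card {j : Fin n // q.1.1 (U.2 j) ≠ q.2.1 (U.2 j)} : ℝ) / n|) := by
      refine ⟨2, ?_⟩
      rintro _ ⟨q, rfl⟩
      have c1 : (Nat.card {i : Fin m // q.1.1 (U.1 i) ≠ q.2.1 (U.1 i)} : ℝ) ≤ m := by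
        have := Finite.card_subtype_le fun i : Fin m => q.1.1 (U.1 i) ≠ q.2.1 (U.1 i)
        have hc : Nat.card (Fin m) = m := by simp
        exact_mod_cast hc ▸ this
      have c2 : (Nat.card {j : Fin n // q.1.1 (U.2 j) ≠ q.2.1 (U.2 j)} : ℝ) ≤ n := by
        have := Finite.card_subtype_le fun j : Fin n => q.1.1 (U.2 j) ≠ q.2.1 (U.2 j)
        have hc : Nat.card (Fin n) = n := by simp
        exact_mod_cast hc ▸ this
      have d1 : (0:ℝ) ≤ (Nat.card {i : Fin m // q.1.1 (U.1 i) ≠ q.2.1 (U.1 i)} : ℝ) :=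
        Nat.cast_nonneg _
      have d2 : (0:ℝ) ≤ (Nat.card {j : Fin n // q.1.1 (U.2 j) ≠ q.2.1 (U.2 j)} : ℝ) :=
        Nat.cast_nonneg _
      rw [abs_le]
      constructor
      · have : (Nat.card {j : Fin n // q.1.1 (U.2 j) ≠ q.2.1 (U.2 j)} : ℝ) / n ≤ 1 := by
          rw [div_le_one hn0]; exact c2
        have h' : (0:ℝ) ≤ (Nat.card {i : Fin m // q.1.1 (U.1 i) ≠ q.2.1 (U.1 i)} : ℝ) / m :=
          div_nonneg d1 hm0.le
        linarith
      · have : (Nat.card {i : Fin m // q.1.1 (U.1 i) ≠ q.2.1 (U.1 i)} : ℝ) / m ≤ 1 := by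
          rw [div_le_one hm0]; exact c1
        have h' : (0:ℝ) ≤ (Nat.card {j : Fin n // q.1.1 (U.2 j) ≠ q.2.1 (U.2 j)} : ℝ) / n :=
          div_nonneg d2 hn0.le
        linarith
    have hAk := le_ciSup hbdd (⟨⟨htilstar, hhtil⟩, ⟨ftilstar, hftil⟩⟩ : H × H)
    rw [← hA] at hAk
    have hA0 : 0 ≤ A := le_trans (abs_nonneg _) hAk
    -- counting identity
    have hsum_card : ∀ (k : ℕ) (v : Fin k → X),
        ∑ j, g2 (v j) = (Nat.card {j : Fin k // htilstar (v j) ≠ ftilstar (v j)} : ℝ) := by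
      intro k v
      have hpt : ∀ j : Fin k, g2 (v j) =
          if htilstar (v j) ≠ ftilstar (v j) then (1:ℝ) else 0 := by
        intro j
        rcases (hH htilstar hhtil).2 (v j) with ha | ha <;>
          rcases (hH ftilstar hftil).2 (v j) with hb' | hb' <;>
          simp [hg2, ha, hb']
      rw [Finset.sum_congr rfl fun j _ => hpt j, Finset.sum_boole,
        Nat.card_eq_fintype_card, Fintype.card_subtype]
    have hlink : (∑ j, g2 (U.2 j)) / n ≤ (∑ i, g2 (U.1 i)) / m + A := by
      have e1 := hsum_card n U.2
      have e2 := hsum_card m U.1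
      rw [e1, e2]
      have habs : (Nat.card {j : Fin n // htilstar (U.2 j) ≠ ftilstar (U.2 j)} : ℝ) / n -
          (Nat.card {i : Fin m // htilstar (U.1 i) ≠ ftilstar (U.1 i)} : ℝ) / m ≤ A := by
        refine le_trans ?_ hAk
        rw [abs_sub_comm]
        exact le_abs_self _
      linarith
    -- triangle inequality for the integrals
    have i1 : Integrable g1 Dt := erb_integrable_of_abs_le (C := 1) Dt hg1m fun x => by
      rw [abs_of_nonneg (hg1b x).1]; exact (hg1b x).2
    have i2 : Integrable g2 Dt := erb_integrable_of_abs_le (C := 1) Dt hg2m fun x => by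
      rw [abs_of_nonneg (hg2b x).1]; exact (hg2b x).2
    have hb3 := hb01 hstar ftilstar (h01Icc _ (hH hstar hhstar).2) (h01Icc _ (hH ftilstar hftil).2)
    have hb4 := hb01 hstar ft (h01Icc _ (hH hstar hhstar).2) hft01
    have hb0 := hb01 h ft (h01Icc _ (hH h hh).2) hft01
    have i3 : Integrable (fun x => |hstar x - ftilstar x|) Dt :=
      erb_integrable_of_abs_le (C := 1) Dt (hmhs.sub hmft').abs fun x => by
        rw [abs_of_nonneg (hb3 x).1]; exact (hb3 x).2
    have i4 : Integrable (fun x => |hstar x - ft x|) Dt :=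
      erb_integrable_of_abs_le (C := 1) Dt (hmhs.sub hft).abs fun x => by
        rw [abs_of_nonneg (hb4 x).1]; exact (hb4 x).2
    have i0 : Integrable (fun x => |h x - ft x|) Dt :=
      erb_integrable_of_abs_le (C := 1) Dt (hmh.sub hft).abs fun x => by
        rw [abs_of_nonneg (hb0 x).1]; exact (hb0 x).2
    have j12 : Integrable (fun x => g1 x + g2 x) Dt := i1.add i2
    have j123 : Integrable (fun x => g1 x + g2 x + |hstar x - ftilstar x|) Dt := j12.add i3
    have j1234 : Integrable (fun x => g1 x + g2 x + |hstar x - ftilstar x| + |hstar x - ft x|)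
        Dt := j123.add i4
    have htri : (∫ x, |h x - ft x| ∂Dt) ≤ (∫ x, g1 x ∂Dt) + (∫ x, g2 x ∂Dt) +
        (∫ x, |hstar x - ftilstar x| ∂Dt) + (∫ x, |hstar x - ft x| ∂Dt) := by
      have step : (∫ x, |h x - ft x| ∂Dt) ≤
          ∫ x, (g1 x + g2 x + |hstar x - ftilstar x| + |hstar x - ft x|) ∂Dt := by
        refine integral_mono i0 j1234 fun x => ?_
        have t1 := abs_sub_le (h x) (htilstar x) (ft x)
        have t2 := abs_sub_le (htilstar x) (ftilstar x) (ft x)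
        have t3 := abs_sub_le (ftilstar x) (hstar x) (ft x)
        have t4 : |ftilstar x - hstar x| = |hstar x - ftilstar x| := abs_sub_comm _ _
        simp only [hg1, hg2]
        rw [t4] at t3
        linarith
      have e3 : ∫ x, (g1 x + g2 x + |hstar x - ftilstar x| + |hstar x - ft x|) ∂Dt =
          (∫ x, (g1 x + g2 x + |hstar x - ftilstar x|) ∂Dt) + ∫ x, |hstar x - ft x| ∂Dt :=
        integral_add j123 i4
      have e2 : ∫ x, (g1 x + g2 x + |hstar x - ftilstar x|) ∂Dt =
          (∫ x, (g1 x + g2 x) ∂Dt) + ∫ x, |hstar x - ftilstar x| ∂Dt :=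
        integral_add j12 i3
      have e1 : ∫ x, (g1 x + g2 x) ∂Dt = (∫ x, g1 x ∂Dt) + ∫ x, g2 x ∂Dt :=
        integral_add i1 i2
      linarith
    -- slack arithmetic
    have hslack : 2 * t + tm ≤ Real.sqrt (L / (2 * n)) +
        12 * Real.sqrt ((2 * (d:ℝ) * Real.log (2 * n) + L) / n) := by
      set Q : ℝ := (2 * (d:ℝ) * Real.log (2 * n) + L) / n with hQ
      have hn1 : (1:ℝ) ≤ n := by exact_mod_cast hn
      have hlog : 0 ≤ Real.log (2 * (n:ℝ)) := Real.log_nonneg (by linarith)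
      have hd0 : (0:ℝ) ≤ (d:ℝ) := Nat.cast_nonneg _
      have hQQ : 2 * L / n ≤ 4 * Q := by
        have h4 : 4 * Q = (8 * (d:ℝ) * Real.log (2 * n) + 4 * L) / n := by rw [hQ]; ring
        rw [h4]
        gcongr
        nlinarith
      have htQ : t ≤ 2 * Real.sqrt Q := by
        rw [ht]
        calc Real.sqrt (2 * L / n) ≤ Real.sqrt (4 * Q) := Real.sqrt_le_sqrt hQQ
          _ = 2 * Real.sqrt Q := by
              rw [Real.sqrt_mul (by norm_num), show Real.sqrt 4 = 2 by
                rw [show (4:ℝ) = 2 ^ 2 by norm_num, Real.sqrt_sq (by norm_num)]]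
      have htmt : tm ≤ t := by
        rw [ht, htm]
        apply Real.sqrt_le_sqrt
        apply div_le_div_of_nonneg_left (by positivity) hn0
        exact_mod_cast hmn
      have hsq0 : 0 ≤ Real.sqrt (L / (2 * n)) := Real.sqrt_nonneg _
      have hQ0 : 0 ≤ Real.sqrt Q := Real.sqrt_nonneg _
      linarith
    -- put everything together
    have hU1' : (∫ x, g1 x ∂Dt) ≤ (∑ j, g1 (U.2 j)) / n + t := by linarith
    have hU2' : (∫ x, g2 x ∂Dt) ≤ (∑ j, g2 (U.2 j)) / n + t := by linarith
    have hU3' : (∑ i, g2 (U.1 i)) / m ≤ (∫ x, g2 x ∂Ds) + tm := le_of_lt hU3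
    simp only [hg1, hg2] at htri hU1' hU2' hU3' hlink ⊢
    linarith
end
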